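/- arXiv:2602.24025 — 7 statements merged into one kernel-verified Lean document; each statement's English description precedes it below -/
import Mathlib

section
/- For real numbers 0 < a < b, the integral of sqrt((r-a)*(b-r))/r over r in [a,b] equals π*((a+b)/2 - sqrt(a*b)). -/
/-!
Writing `s = √((r - a) * (b - r))`, the integrand is `s² / (r s) = (a + b - r) / s - a b / (r s)`.
The first part has primitive `s + (a + b) / 2 · arcsin ((2r - a - b) / (b - a))`, and the
substitution `u = ((a + b) r - 2ab) / ((b - a) r)` gives `√(ab) · arcsin u` as a primitive of
`√(ab) / (r s)`. Both arcsines run from `-1` at `r = a` to `1` at `r = b`, so each contributes `π`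
times its coefficient.
-/

open Real Set

theorem HasDerivAt.arcsin_of_mem_Ioo {f : ℝ → ℝ} {f' x : ℝ} (hf : HasDerivAt f f' x)
    (hfx : f x ∈ Ioo (-1) 1) : HasDerivAt (fun y => arcsin (f y)) (f' / √(1 - f x ^ 2)) x :=
  ((hasDerivAt_arcsin hfx.1.ne' hfx.2.ne).comp x hf).congr_deriv (by ring)

namespace EulerArea

variable {a b r : ℝ}

noncomputable def primitive (a b r : ℝ) : ℝ :=
  √((r - a) * (b - r)) + (a + b) / 2 * arcsin ((2 * r - a - b) / (b - a))
    - √(a * b) * arcsin (((a + b) * r - 2 * (a * b)) / ((b - a) * r))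

lemma one_sub_sq_chord (hab : a < b) :
    √(1 - ((2 * r - a - b) / (b - a)) ^ 2) = 2 * √((r - a) * (b - r)) / (b - a) := by
  have hba : 0 < b - a := sub_pos.2 hab
  rw [show 1 - ((2 * r - a - b) / (b - a)) ^ 2 = (2 / (b - a)) ^ 2 * ((r - a) * (b - r)) by
    field_simp; ring, sqrt_mul (sq_nonneg _), sqrt_sq (by positivity)]
  ring

lemma one_sub_sq_focal (ha : 0 < a) (hab : a < b) (hr : 0 < r) :
    √(1 - (((a + b) * r - 2 * (a * b)) / ((b - a) * r)) ^ 2)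
      = 2 * √(a * b) * √((r - a) * (b - r)) / ((b - a) * r) := by
  have hba : 0 < b - a := sub_pos.2 hab
  have hb : 0 < b := ha.trans hab
  rw [show 1 - (((a + b) * r - 2 * (a * b)) / ((b - a) * r)) ^ 2
      = (2 / ((b - a) * r)) ^ 2 * (a * b) * ((r - a) * (b - r)) by field_simp; ring,
    sqrt_mul (by positivity), sqrt_mul (sq_nonneg _), sqrt_sq (by positivity)]
  ring

lemma hasDerivAt_arcsin_chord (hr : r ∈ Ioo a b) :
    HasDerivAt (fun x => arcsin ((2 * x - a - b) / (b - a))) (1 / √((r - a) * (b - r))) r := by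
  obtain ⟨har, hrb⟩ := hr
  have hab : a < b := har.trans hrb
  have hba : 0 < b - a := sub_pos.2 hab
  have hu : HasDerivAt (fun x => (2 * x - a - b) / (b - a)) (2 / (b - a)) r := by
    simpa using ((((hasDerivAt_id r).const_mul 2).sub_const a).sub_const b).div_const (b - a)
  have hmem : (2 * r - a - b) / (b - a) ∈ Ioo (-1) 1 := by
    constructor
    · rw [lt_div_iff₀ hba]; linarith
    · rw [div_lt_one hba]; linarith
  convert hu.arcsin_of_mem_Ioo hmem using 1
  rw [one_sub_sq_chord hab]
  field_simp

lemma hasDerivAt_arcsin_focal (ha : 0 < a) (hr : r ∈ Ioo a b) :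
    HasDerivAt (fun x => arcsin (((a + b) * x - 2 * (a * b)) / ((b - a) * x)))
      (√(a * b) / (r * √((r - a) * (b - r)))) r := by
  obtain ⟨har, hrb⟩ := hr
  have hab : a < b := har.trans hrb
  have hr0 : 0 < r := ha.trans har
  have hba : 0 < b - a := sub_pos.2 hab
  have hab' : 0 < √(a * b) := sqrt_pos.2 (mul_pos ha (ha.trans hab))
  have hu : HasDerivAt (fun x => ((a + b) * x - 2 * (a * b)) / ((b - a) * x))
      (((a + b) * ((b - a) * r) - ((a + b) * r - 2 * (a * b)) * (b - a)) / ((b - a) * r) ^ 2) r :=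
    (((hasDerivAt_id r).const_mul (a + b)).sub_const _).div
      ((hasDerivAt_id r).const_mul (b - a)) (by positivity) |>.congr_deriv (by simp)
  have hmem : ((a + b) * r - 2 * (a * b)) / ((b - a) * r) ∈ Ioo (-1) 1 := by
    constructor
    · rw [lt_div_iff₀ (by positivity)]; nlinarith
    · rw [div_lt_one (by positivity)]; nlinarith
  convert hu.arcsin_of_mem_Ioo hmem using 1
  rw [one_sub_sq_focal ha hab hr0]
  field_simp
  rw [sq_sqrt (mul_pos ha (ha.trans hab)).le]
  ring

lemma hasDerivAt_sqrt_mul_sub (hr : r ∈ Ioo a b) :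
    HasDerivAt (fun x => √((x - a) * (b - x))) ((a + b - 2 * r) / (2 * √((r - a) * (b - r)))) r :=
  (((hasDerivAt_id r).sub_const a).mul ((hasDerivAt_id r).const_sub b)).sqrt
    (mul_pos (sub_pos.2 hr.1) (sub_pos.2 hr.2)).ne' |>.congr_deriv (by simp; ring)

lemma hasDerivAt_primitive (ha : 0 < a) (hr : r ∈ Ioo a b) :
    HasDerivAt (primitive a b) (√((r - a) * (b - r)) / r) r := by
  have hr0 : 0 < r := ha.trans hr.1
  have hp : 0 < (r - a) * (b - r) := mul_pos (sub_pos.2 hr.1) (sub_pos.2 hr.2)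
  refine (((hasDerivAt_sqrt_mul_sub hr).add ((hasDerivAt_arcsin_chord hr).const_mul _)).sub
    ((hasDerivAt_arcsin_focal ha hr).const_mul _)).congr_deriv ?_
  field_simp
  rw [sq_sqrt (mul_pos ha (ha.trans (hr.1.trans hr.2))).le, sq_sqrt hp.le]
  ring

lemma continuousOn_primitive (ha : 0 < a) (hab : a < b) :
    ContinuousOn (primitive a b) (Icc a b) := by
  have hden : ∀ x ∈ Icc a b, (b - a) * x ≠ 0 := fun x hx =>
    mul_ne_zero (sub_pos.2 hab).ne' (ha.trans_le hx.1).ne'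
  unfold primitive
  fun_prop (disch := assumption)

lemma primitive_left (ha : 0 < a) (hab : a < b) :
    primitive a b a = -(π / 2) * ((a + b) / 2 - √(a * b)) := by
  have hba : b - a ≠ 0 := (sub_pos.2 hab).ne'
  have h₁ : (2 * a - a - b) / (b - a) = -1 := by field_simp; ring
  have h₂ : ((a + b) * a - 2 * (a * b)) / ((b - a) * a) = -1 := by field_simp; ring
  simp only [primitive, h₁, h₂, sub_self, zero_mul, sqrt_zero, arcsin_neg, arcsin_one]
  ring

lemma primitive_right (ha : 0 < a) (hab : a < b) :
    primitive a b b = π / 2 * ((a + b) / 2 - √(a * b)) := by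
  have hba : b - a ≠ 0 := (sub_pos.2 hab).ne'
  have hb : b ≠ 0 := (ha.trans hab).ne'
  have h₁ : (2 * b - a - b) / (b - a) = 1 := by field_simp; ring
  have h₂ : ((a + b) * b - 2 * (a * b)) / ((b - a) * b) = 1 := by field_simp; ring
  simp only [primitive, h₁, h₂, sub_self, mul_zero, sqrt_zero, arcsin_one]
  ring

end EulerArea

open EulerArea in
/-- For real numbers `0 < a < b`, the integral of `sqrt((r-a)*(b-r))/r` over `[a,b]`
equals `π * ((a+b)/2 - sqrt (a*b))`. -/
theorem stmt_0 (a b : ℝ) (ha : 0 < a) (hab : a < b) :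
    ∫ r in a..b, Real.sqrt ((r - a) * (b - r)) / r
      = Real.pi * ((a + b) / 2 - Real.sqrt (a * b)) := by
  have hint : IntervalIntegrable (fun r => √((r - a) * (b - r)) / r) MeasureTheory.volume a b := by
    refine ContinuousOn.intervalIntegrable fun r hr => ?_
    rw [uIcc_of_le hab.le] at hr
    have hsqrt : Continuous fun r => √((r - a) * (b - r)) := by fun_prop
    exact hsqrt.continuousWithinAt.div continuousWithinAt_id (ha.trans_le hr.1).ne'
  rw [intervalIntegral.integral_eq_sub_of_hasDerivAt_of_le hab.le (continuousOn_primitive ha hab)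
    (fun r hr => hasDerivAt_primitive ha hr) hint, primitive_left ha hab, primitive_right ha hab]
  ring
end

section
/- Let β, ϖ > 0 with 2ϖ²β² < 1, set e = sqrt(1 - 2ϖ²β²) and r± = (1 ± e)/(2β). Then r− and r+ are exactly the two roots of r² - r/β + ϖ²/2 = 0, and the integral 2·∫_{r−}^{r+} sqrt(-2 - ϖ²/r² + 2/(β r)) dr equals sqrt(2)·π·(1 - sqrt(1 - e²))/β. -/
/-! By Vieta's formulas the integrand is `√2 · √((r₊ - r)(r - r₋)) / r`. This has an
elementary primitive, a square root plus two arcsines, and both arcsines run from `-π/2`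
to `π/2` over `[r₋, r₊]`, so the integral is
`√2 π ((r₋ + r₊)/2 - √(r₋ r₊)) = √2 π (1/(2β) - ϖ/√2)`. -/

open Real Set

theorem HasDerivAt.arcsin_of_one_sub_sq_eq {f : ℝ → ℝ} {f' x s : ℝ} (hf : HasDerivAt f f' x)
    (hs : 0 < s) (h : 1 - f x ^ 2 = s ^ 2) : HasDerivAt (fun y => arcsin (f y)) (f' / s) x := by
  have hlt : |f x| < 1 := by rw [← sq_lt_one_iff_abs_lt_one]; nlinarith
  obtain ⟨h₁, h₂⟩ := abs_lt.mp hlt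
  exact ((hasDerivAt_arcsin h₁.ne' h₂.ne).comp x hf).congr_deriv
    (by rw [h, sqrt_sq hs.le]; ring)

section SqrtDivIntegral

variable {a b x : ℝ}

theorem hasDerivAt_sqrt_mul_sub (hx : x ∈ Ioo a b) :
    HasDerivAt (fun y => √((b - y) * (y - a)))
      ((a + b - 2 * x) / (2 * √((b - x) * (x - a)))) x := by
  have hQ : HasDerivAt (fun y => (b - y) * (y - a)) (a + b - 2 * x) x :=
    (((hasDerivAt_id x).const_sub b).mul ((hasDerivAt_id x).sub_const a)).congr_deriv
      (by simp only [id_eq]; ring)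
  exact hQ.sqrt (mul_pos (sub_pos.2 hx.2) (sub_pos.2 hx.1)).ne'

theorem hasDerivAt_arcsin_affine (hx : x ∈ Ioo a b) :
    HasDerivAt (fun y => arcsin ((2 * y - (a + b)) / (b - a))) (1 / √((b - x) * (x - a))) x := by
  have hba : 0 < b - a := sub_pos.2 (hx.1.trans hx.2)
  have hQ : 0 < (b - x) * (x - a) := mul_pos (sub_pos.2 hx.2) (sub_pos.2 hx.1)
  have hg : HasDerivAt (fun y => (2 * y - (a + b)) / (b - a)) (2 / (b - a)) x := by
    simpa using (((hasDerivAt_id x).const_mul 2).sub_const (a + b)).div_const (b - a)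
  have hsq : 1 - ((2 * x - (a + b)) / (b - a)) ^ 2
      = (2 * √((b - x) * (x - a)) / (b - a)) ^ 2 := by
    rw [div_pow, div_pow, mul_pow, sq_sqrt hQ.le]
    field_simp
    ring
  refine (hg.arcsin_of_one_sub_sq_eq (by positivity) hsq).congr_deriv ?_
  field_simp

theorem hasDerivAt_arcsin_mobius (ha : 0 < a) (hx : x ∈ Ioo a b) :
    HasDerivAt (fun y => arcsin (((a + b) * y - 2 * (a * b)) / (y * (b - a))))
      (√(a * b) / (x * √((b - x) * (x - a)))) x := by
  have hba : 0 < b - a := sub_pos.2 (hx.1.trans hx.2)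
  have hx0 : 0 < x := ha.trans hx.1
  have hab : 0 < a * b := mul_pos ha (ha.trans (hx.1.trans hx.2))
  have hQ : 0 < (b - x) * (x - a) := mul_pos (sub_pos.2 hx.2) (sub_pos.2 hx.1)
  have hg : HasDerivAt (fun y => ((a + b) * y - 2 * (a * b)) / (y * (b - a)))
      (2 * (a * b) / (x ^ 2 * (b - a))) x := by
    have := (((hasDerivAt_id x).const_mul (a + b)).sub_const (2 * (a * b))).div
      ((hasDerivAt_id x).mul_const (b - a)) (by positivity)
    refine this.congr_deriv ?_
    simp only [id_eq]
    field_simp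
    ring
  have hsq : 1 - (((a + b) * x - 2 * (a * b)) / (x * (b - a))) ^ 2
      = (2 * √(a * b) * √((b - x) * (x - a)) / (x * (b - a))) ^ 2 := by
    rw [div_pow, div_pow, mul_pow, mul_pow, mul_pow, sq_sqrt hQ.le, sq_sqrt hab.le]
    field_simp
    ring
  refine (hg.arcsin_of_one_sub_sq_eq (by positivity) hsq).congr_deriv ?_
  field_simp
  rw [sq_sqrt hab.le]

noncomputable def sqrtDivPrimitive (a b x : ℝ) : ℝ :=
  √((b - x) * (x - a)) + (a + b) / 2 * arcsin ((2 * x - (a + b)) / (b - a))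
    - √(a * b) * arcsin (((a + b) * x - 2 * (a * b)) / (x * (b - a)))

theorem hasDerivAt_sqrtDivPrimitive (ha : 0 < a) (hx : x ∈ Ioo a b) :
    HasDerivAt (sqrtDivPrimitive a b) (√((b - x) * (x - a)) / x) x := by
  have hx0 : 0 < x := ha.trans hx.1
  have hQ : 0 < (b - x) * (x - a) := mul_pos (sub_pos.2 hx.2) (sub_pos.2 hx.1)
  have hab : 0 ≤ a * b := (mul_pos ha (ha.trans (hx.1.trans hx.2))).le
  refine (((hasDerivAt_sqrt_mul_sub hx).add ((hasDerivAt_arcsin_affine hx).const_mul _)).sub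
    ((hasDerivAt_arcsin_mobius ha hx).const_mul _)).congr_deriv ?_
  have hsQ : √((b - x) * (x - a)) ^ 2 = (b - x) * (x - a) := sq_sqrt hQ.le
  field_simp
  linear_combination -2 * hsQ - 2 * sq_sqrt hab

theorem continuousOn_sqrtDivPrimitive (ha : 0 < a) (hab : a < b) :
    ContinuousOn (sqrtDivPrimitive a b) (Icc a b) := by
  refine ((continuous_sqrt.comp (by fun_prop)).continuousOn.add
    (continuous_const.mul (continuous_arcsin.comp (by fun_prop))).continuousOn).sub
    (continuousOn_const.mul (continuous_arcsin.comp_continuousOn ?_))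
  exact (by fun_prop : Continuous _).continuousOn.div (by fun_prop)
    fun y hy => mul_ne_zero (ha.trans_le hy.1).ne' (sub_pos.2 hab).ne'

theorem sqrtDivPrimitive_right_sub_left (ha : 0 < a) (hab : a < b) :
    sqrtDivPrimitive a b b - sqrtDivPrimitive a b a = π * ((a + b) / 2 - √(a * b)) := by
  have hba : b - a ≠ 0 := (sub_pos.2 hab).ne'
  have hb : b ≠ 0 := (ha.trans hab).ne'
  have h₁ : (2 * b - (a + b)) / (b - a) = 1 := by field_simp; ring
  have h₂ : ((a + b) * b - 2 * (a * b)) / (b * (b - a)) = 1 := by field_simp; ring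
  have h₃ : (2 * a - (a + b)) / (b - a) = -1 := by field_simp; ring
  have h₄ : ((a + b) * a - 2 * (a * b)) / (a * (b - a)) = -1 := by field_simp; ring
  simp only [sqrtDivPrimitive, h₁, h₂, h₃, h₄, sub_self, zero_mul, mul_zero, sqrt_zero,
    arcsin_one, arcsin_neg_one]
  ring

theorem integral_sqrt_mul_sub_div_self (ha : 0 < a) (hab : a < b) :
    ∫ x in a..b, √((b - x) * (x - a)) / x = π * ((a + b) / 2 - √(a * b)) := by
  have hint : IntervalIntegrable (fun x => √((b - x) * (x - a)) / x)
      MeasureTheory.volume a b := by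
    refine ContinuousOn.intervalIntegrable ?_
    rw [uIcc_of_le hab.le]
    exact (by fun_prop : Continuous _).continuousOn.div continuousOn_id
      fun x hx => (ha.trans_le hx.1).ne'
  rw [intervalIntegral.integral_eq_sub_of_hasDerivAt_of_le hab.le
    (continuousOn_sqrtDivPrimitive ha hab) (fun x hx => hasDerivAt_sqrtDivPrimitive ha hx) hint]
  exact sqrtDivPrimitive_right_sub_left ha hab

end SqrtDivIntegral

theorem add_eq_and_mul_eq_of_sq_eq {β ϖ e : ℝ} (hβ : β ≠ 0)
    (he : e ^ 2 = 1 - 2 * ϖ ^ 2 * β ^ 2) :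
    (1 - e) / (2 * β) + (1 + e) / (2 * β) = 1 / β ∧
      (1 - e) / (2 * β) * ((1 + e) / (2 * β)) = ϖ ^ 2 / 2 := by
  constructor
  · field_simp; ring
  · field_simp; linear_combination -he

theorem sqrt_neg_two_sub_div_sq_add_div_eq {β ϖ a b r : ℝ} (hsum : a + b = 1 / β)
    (hprod : a * b = ϖ ^ 2 / 2) (hr : 0 < r) :
    √(-2 - ϖ ^ 2 / r ^ 2 + 2 / (β * r)) = √2 * (√((b - r) * (r - a)) / r) := by
  have h : -2 - ϖ ^ 2 / r ^ 2 + 2 / (β * r) = 2 * ((b - r) * (r - a)) / r ^ 2 := by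
    rw [show (b - r) * (r - a) = -r ^ 2 + r / β - ϖ ^ 2 / 2 by
      linear_combination r * hsum - hprod]
    field_simp
    ring
  rw [h, mul_div_assoc, sqrt_mul zero_le_two, sqrt_div' _ (sq_nonneg r), sqrt_sq hr.le]

/-- The two roots of `r² - r/β + ϖ²/2 = 0` are `r± = (1 ± e)/(2β)` with
`e = sqrt (1 - 2ϖ²β²)`, and `2∫_{r₋}^{r₊} sqrt(-2 - ϖ²/r² + 2/(βr)) dr
  = sqrt 2 * π * (1 - sqrt (1 - e²))/β`. -/
theorem stmt_1 (β ϖ : ℝ) (hβ : 0 < β) (hϖ : 0 < ϖ) (h : 2 * ϖ ^ 2 * β ^ 2 < 1) :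
    (∀ r : ℝ, r ^ 2 - r / β + ϖ ^ 2 / 2 = 0 ↔
      r = (1 - Real.sqrt (1 - 2 * ϖ ^ 2 * β ^ 2)) / (2 * β) ∨
      r = (1 + Real.sqrt (1 - 2 * ϖ ^ 2 * β ^ 2)) / (2 * β)) ∧
    2 * ∫ r in ((1 - Real.sqrt (1 - 2 * ϖ ^ 2 * β ^ 2)) / (2 * β))..(
          (1 + Real.sqrt (1 - 2 * ϖ ^ 2 * β ^ 2)) / (2 * β)),
        Real.sqrt (-2 - ϖ ^ 2 / r ^ 2 + 2 / (β * r))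
      = Real.sqrt 2 * Real.pi *
          (1 - Real.sqrt (1 - (Real.sqrt (1 - 2 * ϖ ^ 2 * β ^ 2)) ^ 2)) / β := by
  set e := √(1 - 2 * ϖ ^ 2 * β ^ 2)
  set a := (1 - e) / (2 * β)
  set b := (1 + e) / (2 * β)
  have he2 : e ^ 2 = 1 - 2 * ϖ ^ 2 * β ^ 2 := sq_sqrt (by linarith)
  have he0 : 0 < e := sqrt_pos.2 (by linarith)
  have he1 : e < 1 := (sqrt_lt' one_pos).2 (by nlinarith [mul_pos (pow_pos hϖ 2) (pow_pos hβ 2)])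
  obtain ⟨hsum, hprod⟩ := add_eq_and_mul_eq_of_sq_eq hβ.ne' he2
  have ha : 0 < a := div_pos (by linarith) (by positivity)
  have hab : a < b := div_lt_div_of_pos_right (by linarith) (by positivity)
  refine ⟨fun r => ?_, ?_⟩
  · rw [show r ^ 2 - r / β + ϖ ^ 2 / 2 = (r - a) * (r - b) by
      linear_combination r * hsum - hprod, mul_eq_zero, sub_eq_zero, sub_eq_zero]
  rw [intervalIntegral.integral_congr fun r hr => sqrt_neg_two_sub_div_sq_add_div_eq hsum hprod
      ((lt_min ha (ha.trans hab)).trans_le hr.1), intervalIntegral.integral_const_mul,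
    integral_sqrt_mul_sub_div_self ha hab, hsum, hprod,
    show 1 - e ^ 2 = 2 * (ϖ * β) ^ 2 by linarith,
    sqrt_mul zero_le_two, sqrt_div (sq_nonneg ϖ), sqrt_sq hϖ.le, sqrt_sq (by positivity)]
  have h2 : √2 ^ 2 = 2 := sq_sqrt zero_le_two
  field_simp
  linear_combination (β * ϖ) * h2
end

section
/- For every e ∈ (0,1) and every natural number n, ∫₀^{2π} cos(n θ)/(1 + e cos θ) dθ = (2π/sqrt(1 - e²)) · ((sqrt(1 - e²) - 1)/e)^n. -/
/-!
Up to the factor `√(1 - e²)`, `1 / (1 + e cos θ)` is the Poisson kernel of the unit disc at the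
real point `r = (√(1 - e²) - 1) / e`, which lies in the disc. The Poisson integral formula for the
harmonic function `Re zⁿ` then gives `∫₀^{2π} P_r(θ) cos (n θ) dθ = 2π rⁿ`.
-/

open Real InnerProductSpace Metric

theorem poissonKernel_circleMap (r θ : ℝ) :
    poissonKernel 0 r (circleMap 0 1 θ) = (1 - r ^ 2) / (1 - 2 * r * cos θ + r ^ 2) := by
  simp only [poissonKernel_def, sub_zero, norm_circleMap_zero, abs_one, Complex.norm_real,
    Real.norm_eq_abs, sq_abs, one_pow, ← Complex.normSq_eq_norm_sq, Complex.normSq_apply]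
  simp only [circleMap_zero, Complex.ofReal_one, one_mul, Complex.sub_re, Complex.sub_im,
    Complex.exp_ofReal_mul_I_re, Complex.exp_ofReal_mul_I_im, Complex.ofReal_re, Complex.ofReal_im]
  congr 1
  linear_combination sin_sq_add_cos_sq θ

theorem re_circleMap_pow (n : ℕ) (θ : ℝ) : ((circleMap 0 1 θ) ^ n).re = cos (n * θ) := by
  rw [circleMap_zero, Complex.ofReal_one, one_mul, ← Complex.exp_nat_mul, ← mul_assoc,
    ← Complex.ofReal_natCast, ← Complex.ofReal_mul, Complex.exp_ofReal_mul_I_re]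

theorem integral_poissonKernel_mul_cos (n : ℕ) {r : ℝ} (hr : |r| < 1) :
    ∫ θ in (0:ℝ)..2 * π, poissonKernel 0 r (circleMap 0 1 θ) * cos (n * θ) = 2 * π * r ^ n := by
  have hharm : HarmonicOnNhd (fun z : ℂ ↦ (z ^ n).re) (closedBall 0 1) :=
    fun z _ ↦ ((differentiable_pow n).analyticAt z).harmonicAt_re
  have hw : (r : ℂ) ∈ ball (0 : ℂ) 1 := by simpa using hr
  have h := hharm.circleAverage_poissonKernel_smul hw
  rw [circleAverage_def, smul_eq_mul, inv_mul_eq_iff_eq_mul₀ (by positivity)] at h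
  simpa only [smul_eq_mul, Pi.mul_apply, re_circleMap_pow,
    ← Complex.ofReal_pow, Complex.ofReal_re] using h

section
variable {e : ℝ} (he0 : e ≠ 0) (he : |e| < 1)
include he0 he

theorem abs_sqrt_one_sub_sq_sub_one_div_lt_one : |(√(1 - e ^ 2) - 1) / e| < 1 := by
  have hs := sq_sqrt (by nlinarith [sq_abs e, abs_nonneg e] : (0:ℝ) ≤ 1 - e ^ 2)
  have hs0 := sqrt_nonneg (1 - e ^ 2)
  have he' : 0 < |e| := abs_pos.mpr he0
  rw [abs_div, div_lt_one he', abs_sub_comm, abs_of_nonneg (by nlinarith)]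
  nlinarith [sq_abs e]

theorem poissonKernel_circleMap_sqrt_one_sub_sq_sub_one_div (θ : ℝ) :
    poissonKernel 0 ((√(1 - e ^ 2) - 1) / e : ℝ) (circleMap 0 1 θ)
      = √(1 - e ^ 2) / (1 + e * cos θ) := by
  have hs := sq_sqrt (by nlinarith [sq_abs e, abs_nonneg e] : (0:ℝ) ≤ 1 - e ^ 2)
  have hs1 : √(1 - e ^ 2) ≠ 1 := by
    intro h; rw [h] at hs; exact he0 (by nlinarith)
  set s := √(1 - e ^ 2)
  have hnum : 1 - ((s - 1) / e) ^ 2 = 2 * s * (1 - s) / e ^ 2 := by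
    field_simp; linear_combination hs
  have hden : 1 - 2 * ((s - 1) / e) * cos θ + ((s - 1) / e) ^ 2
      = 2 * (1 - s) * (1 + e * cos θ) / e ^ 2 := by
    field_simp; linear_combination hs
  have hs1_sub : 1 - s ≠ 0 := sub_ne_zero.mpr (Ne.symm hs1)
  rw [poissonKernel_circleMap, hnum, hden]
  field_simp

end

/-- Fourier coefficients of `1/(1 + e cos θ)`. -/
theorem stmt_2 (e : ℝ) (he : 0 < e) (he1 : e < 1) (n : ℕ) :
    ∫ θ in (0:ℝ)..(2 * Real.pi), Real.cos (n * θ) / (1 + e * Real.cos θ)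
      = (2 * Real.pi / Real.sqrt (1 - e ^ 2)) * ((Real.sqrt (1 - e ^ 2) - 1) / e) ^ n := by
  have he0 : e ≠ 0 := he.ne'
  have habs : |e| < 1 := abs_lt.mpr ⟨by linarith, he1⟩
  have hs : √(1 - e ^ 2) ≠ 0 := (sqrt_pos.mpr (by nlinarith)).ne'
  have hkernel : ∀ θ, cos (n * θ) / (1 + e * cos θ) = (√(1 - e ^ 2))⁻¹ *
      (poissonKernel 0 ((√(1 - e ^ 2) - 1) / e : ℝ) (circleMap 0 1 θ) * cos (n * θ)) := by
    intro θ
    rw [poissonKernel_circleMap_sqrt_one_sub_sq_sub_one_div he0 habs]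
    field_simp
  rw [intervalIntegral.integral_congr fun θ _ ↦ hkernel θ, intervalIntegral.integral_const_mul,
    integral_poissonKernel_mul_cos n (abs_sqrt_one_sub_sq_sub_one_div_lt_one he0 habs)]
  ring
end

section
/- Fix e ∈ (0,1) and β > 0, set s := (sqrt(1-e²)-1)/e, λ₀ := -e·s, λ₁ := -sqrt(1-e²)·((1+sqrt(1+7β))² - 1)/(7β) + 1, and λ₋₁ := -sqrt(1-e²)·((-1+sqrt(1+7β))² - 1)/(7β) + 1. Then the determinant of the 2×2 symmetric matrix E with E₁₁ = λ₁ + (λ₀-2)s², E₁₂ = E₂₁ = s(1-λ₀), E₂₂ = λ₀ + (λ₋₁-2)s² equals -s²(1-e²)(1+7β)(3+7β)/(49β²), which is strictly negative. In particular E has one positive and one negative eigenvalue. -/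
open Polynomial Matrix in
lemma my_charpoly_fin_two (M : Matrix (Fin 2) (Fin 2) ℝ) :
    M.charpoly = X ^ 2 - C M.trace * X + C M.det := by
  have hcm : charmatrix M = !![X - C (M 0 0), -C (M 0 1); -C (M 1 0), X - C (M 1 1)] := by
    apply Matrix.ext
    intro i j
    fin_cases i <;> fin_cases j <;>
      simp [charmatrix_apply, Matrix.diagonal]
  rw [Matrix.charpoly, hcm, Matrix.det_fin_two_of, Matrix.trace_fin_two, Matrix.det_fin_two]
  simp only [C_add, C_mul, C_sub]
  ring

open Polynomial in
lemma my_eigen_split (M : Matrix (Fin 2) (Fin 2) ℝ) (hd : M.det < 0) :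
    ∃ u v : ℝ, 0 < u ∧ v < 0 ∧ M.charpoly = (X - C u) * (X - C v) := by
  set tr := M.trace with htr
  have hD : 0 < tr ^ 2 - 4 * M.det := by nlinarith [sq_nonneg tr]
  set r := Real.sqrt (tr ^ 2 - 4 * M.det) with hrdef
  have hr0 : 0 ≤ r := Real.sqrt_nonneg _
  have hr2 : r ^ 2 = tr ^ 2 - 4 * M.det := Real.sq_sqrt hD.le
  refine ⟨(tr + r) / 2, (tr - r) / 2, ?_, ?_, ?_⟩
  · nlinarith [hr2, hd, hr0]
  · nlinarith [hr2, hd, hr0]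
  · have hsum : (tr + r) / 2 + (tr - r) / 2 = tr := by ring
    have hprod : (tr + r) / 2 * ((tr - r) / 2) = M.det := by
      have h4 : (tr + r) / 2 * ((tr - r) / 2) = (tr ^ 2 - r ^ 2) / 4 := by ring
      rw [h4, hr2]; ring
    rw [my_charpoly_fin_two, ← htr, ← hsum, ← hprod, C_add, C_mul]
    ring

open Polynomial in
/-- The determinant of the block `E` equals `-s²(1-e²)(1+7β)(3+7β)/(49β²) < 0`; in
particular `E` has one positive and one negative eigenvalue. -/
theorem stmt_7 (e β : ℝ) (he : 0 < e) (he1 : e < 1) (hβ : 0 < β) :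
    let s := (Real.sqrt (1 - e ^ 2) - 1) / e
    let L0 := -e * s
    let L1 := -Real.sqrt (1 - e ^ 2) * ((1 + Real.sqrt (1 + 7 * β)) ^ 2 - 1) / (7 * β) + 1
    let Lm := -Real.sqrt (1 - e ^ 2) * ((-1 + Real.sqrt (1 + 7 * β)) ^ 2 - 1) / (7 * β) + 1
    let E : Matrix (Fin 2) (Fin 2) ℝ :=
      !![L1 + (L0 - 2) * s ^ 2, s * (1 - L0); s * (1 - L0), L0 + (Lm - 2) * s ^ 2]
    E.det = -s ^ 2 * (1 - e ^ 2) * (1 + 7 * β) * (3 + 7 * β) / (49 * β ^ 2) ∧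
    E.det < 0 ∧
    ∃ u v : ℝ, 0 < u ∧ v < 0 ∧ E.charpoly = (X - C u) * (X - C v) := by
  intro s L0 L1 Lm E
  set t := Real.sqrt (1 - e ^ 2) with htdef
  set b := Real.sqrt (1 + 7 * β) with hbdef
  have h1e : (0:ℝ) < 1 - e ^ 2 := by nlinarith
  have ht2 : t ^ 2 = 1 - e ^ 2 := Real.sq_sqrt h1e.le
  have ht0 : 0 < t := Real.sqrt_pos.mpr h1e
  have ht1 : t < 1 := by nlinarith [ht2]
  have hb0 : 0 ≤ b := Real.sqrt_nonneg _
  have hb2 : b ^ 2 = 1 + 7 * β := Real.sq_sqrt (by nlinarith)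
  have hb1 : 1 < b := by nlinarith [hb2]
  have hsv : s = (t - 1) / e := rfl
  have hsneg : s < 0 := div_neg_of_neg_of_pos (by linarith) he
  have hL0v : L0 = 1 - t := by
    show -e * ((t - 1) / e) = 1 - t
    field_simp
    ring
  have hs2 : s ^ 2 = (1 - t) / (1 + t) := by
    rw [hsv]
    rw [div_pow, div_eq_div_iff (by positivity) (by positivity)]
    linear_combination (t - 1) * ht2
  have hL1v : L1 = -t * ((1 + b) ^ 2 - 1) / (7 * β) + 1 := rfl
  have hLmv : Lm = -t * ((-1 + b) ^ 2 - 1) / (7 * β) + 1 := rfl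
  have hβb : β = (b ^ 2 - 1) / 7 := by rw [hb2]; ring
  have hbm1 : (0:ℝ) < b ^ 2 - 1 := by nlinarith
  have hdet : E.det = -s ^ 2 * (1 - e ^ 2) * (1 + 7 * β) * (3 + 7 * β) / (49 * β ^ 2) := by
    show (Matrix.det !![L1 + (L0 - 2) * s ^ 2, s * (1 - L0); s * (1 - L0),
        L0 + (Lm - 2) * s ^ 2]) = _
    rw [Matrix.det_fin_two_of, hL1v, hLmv, hL0v]
    have key : s * (1 - (1 - t)) * (s * (1 - (1 - t))) = s ^ 2 * t ^ 2 := by ring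
    rw [key, hs2, ← ht2, hβb]
    have h7 : (7:ℝ) * ((b ^ 2 - 1) / 7) = b ^ 2 - 1 := by ring
    rw [h7]
    field_simp
    ring
  have hs2pos : 0 < s ^ 2 := by nlinarith [hsneg]
  have hdneg : E.det < 0 := by
    rw [hdet]
    apply div_neg_of_neg_of_pos
    · have h17 : (0:ℝ) < 1 + 7 * β := by linarith
      have h37 : (0:ℝ) < 3 + 7 * β := by linarith
      nlinarith [mul_pos (mul_pos (mul_pos hs2pos h1e) h17) h37]
    · positivity
  exact ⟨hdet, hdneg, my_eigen_split E hdneg⟩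
end

section
/- Fix e ∈ (0,1) and β > 0, set s := (sqrt(1-e²)-1)/e, λ₋₁ := -sqrt(1-e²)·((sqrt(1+7β)-1)² - 1)/(7β) + 1, and κ₁ := sqrt(1-e²)·(1 + 2 sqrt(1+7β))·(sqrt(1+7β) - 2)² / (7β(3+7β)). Then κ₁ ≥ 0 and λ₋₁ - κ₁ = 2(3 + 7βs²)/((3+7β)(1+s²)), which is strictly positive. -/
/-- `κ₁ ≥ 0` and `λ₋₁ - κ₁ = 2(3+7βs²)/((3+7β)(1+s²)) > 0`. -/
theorem stmt_8 (e β : ℝ) (he : 0 < e) (he1 : e < 1) (hβ : 0 < β) :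
    let s := (Real.sqrt (1 - e ^ 2) - 1) / e
    let Lm := -Real.sqrt (1 - e ^ 2) * ((Real.sqrt (1 + 7 * β) - 1) ^ 2 - 1) / (7 * β) + 1
    let κ₁ := Real.sqrt (1 - e ^ 2) * (1 + 2 * Real.sqrt (1 + 7 * β)) *
        (Real.sqrt (1 + 7 * β) - 2) ^ 2 / (7 * β * (3 + 7 * β))
    0 ≤ κ₁ ∧
    Lm - κ₁ = 2 * (3 + 7 * β * s ^ 2) / ((3 + 7 * β) * (1 + s ^ 2)) ∧
    0 < 2 * (3 + 7 * β * s ^ 2) / ((3 + 7 * β) * (1 + s ^ 2)) := by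
  intro s Lm κ₁
  set σ := Real.sqrt (1 - e ^ 2) with hσ
  set t := Real.sqrt (1 + 7 * β) with ht
  have hσ2 : σ ^ 2 = 1 - e ^ 2 := Real.sq_sqrt (by nlinarith)
  have hσpos : 0 < σ := Real.sqrt_pos.mpr (by nlinarith)
  have hσ1 : σ < 1 := by nlinarith
  have ht2 : t ^ 2 = 1 + 7 * β := Real.sq_sqrt (by nlinarith)
  have htnn : 0 ≤ t := Real.sqrt_nonneg _
  have ht1 : 1 < t := by nlinarith
  have hβt : 7 * β = t ^ 2 - 1 := by linarith
  have hs2 : s ^ 2 = (1 - σ) / (1 + σ) := by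
    have he0 : e ≠ 0 := ne_of_gt he
    have h1σ : (1 + σ) ≠ 0 := by positivity
    have h1σ' : (1 - σ) ≠ 0 := by linarith
    show ((σ - 1) / e) ^ 2 = (1 - σ) / (1 + σ)
    rw [div_pow, div_eq_div_iff (by positivity) h1σ]
    nlinarith [hσ2]
  refine ⟨by positivity, ?_, by positivity⟩
  show -σ * ((t - 1) ^ 2 - 1) / (7 * β) + 1 - σ * (1 + 2 * t) * (t - 2) ^ 2 /
      (7 * β * (3 + 7 * β)) = 2 * (3 + 7 * β * s ^ 2) / ((3 + 7 * β) * (1 + s ^ 2))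
  rw [hs2, hβt]
  have h1 : t ^ 2 - 1 ≠ 0 := by nlinarith
  have h2 : (3 : ℝ) + (t ^ 2 - 1) ≠ 0 := by nlinarith
  have h3 : (1 : ℝ) + σ ≠ 0 := by positivity
  field_simp
  ring
end

section
/- Let α > 0, β := α/(α+4), r > 0, and z ≠ 0 real. Then 1/r + (4/α)/sqrt(r² + (1+2α)z²) > (1/β)/sqrt(r² + (1+7β)z²). Equivalently, the potential V(r,z) := ϖ²/(2r²) - 1/r - (4/α)/sqrt(r² + (1+2α)z²) is strictly smaller than V₂(r,z) := ϖ²/(2r²) - (1/β)/sqrt(r² + (1+7β)z²) for all z ≠ 0, with equality at z = 0. -/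
/-!
Writing `β = α / (α + 4)`, one has `1 / β = 1 + 4 / α` and the identity
`(1 + 7β) = (1 - β)(1 + 2α)`, so `r² + (1 + 7β) z²` is the convex combination of `r²` and
`r² + (1 + 2α) z²` with weights `β` and `1 - β`. The inequality is therefore Jensen's inequality
for the strictly convex function `x ↦ 1 / √x`, strict because the two points differ when `z ≠ 0`.
-/

open Real Set

lemma strictConvexOn_one_div_sqrt : StrictConvexOn ℝ (Ioi 0) fun x : ℝ ↦ 1 / √x := by
  have himage : sqrt '' Ioi 0 = Ioi 0 := by
    ext y
    refine ⟨?_, fun (hy : 0 < y) ↦ ⟨y ^ 2, pow_pos hy 2, sqrt_sq hy.le⟩⟩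
    rintro ⟨x, hx, rfl⟩
    exact sqrt_pos.2 hx
  have hinv : ConvexOn ℝ (sqrt '' Ioi 0) fun y : ℝ ↦ y ^ (-1 : ℤ) := by
    rw [himage]
    exact (strictConvexOn_zpow (by norm_num) (by norm_num)).convexOn
  have hanti : StrictAntiOn (fun y : ℝ ↦ y ^ (-1 : ℤ)) (sqrt '' Ioi 0) := by
    rw [himage]
    intro a ha b _ hab
    simpa only [zpow_neg_one] using inv_strictAnti₀ ha hab
  have hsqrt : StrictConcaveOn ℝ (Ioi 0) sqrt :=
    strictConcaveOn_sqrt.subset Ioi_subset_Ici_self (convex_Ioi 0)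
  simpa only [Function.comp_def, zpow_neg_one, one_div] using
    hinv.comp_strictConcaveOn hsqrt hanti

lemma one_div_sqrt_mul_add_mul_lt {a b t : ℝ} (ha : 0 < a) (hb : 0 < b) (hab : a ≠ b)
    (ht₀ : 0 < t) (ht₁ : t < 1) :
    1 / √(t * a + (1 - t) * b) < t / √a + (1 - t) / √b := by
  simpa only [smul_eq_mul, mul_one_div] using
    strictConvexOn_one_div_sqrt.2 ha hb hab ht₀ (sub_pos.2 ht₁) (add_sub_cancel t 1)

/-- Comparison of the potentials `V` and `V₂` of the isosceles three-body problem: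
strict inequality for `z ≠ 0`, equality at `z = 0`. -/
theorem stmt_17 (α ϖ r z : ℝ) (hα : 0 < α) (hr : 0 < r) (hz : z ≠ 0) :
    let β := α / (α + 4)
    (1 / r + (4 / α) / Real.sqrt (r ^ 2 + (1 + 2 * α) * z ^ 2)
        > (1 / β) / Real.sqrt (r ^ 2 + (1 + 7 * β) * z ^ 2)) ∧
    (ϖ ^ 2 / (2 * r ^ 2) - 1 / r - (4 / α) / Real.sqrt (r ^ 2 + (1 + 2 * α) * z ^ 2)
        < ϖ ^ 2 / (2 * r ^ 2) - (1 / β) / Real.sqrt (r ^ 2 + (1 + 7 * β) * z ^ 2)) ∧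
    (ϖ ^ 2 / (2 * r ^ 2) - 1 / r - (4 / α) / Real.sqrt (r ^ 2 + (1 + 2 * α) * (0:ℝ) ^ 2)
        = ϖ ^ 2 / (2 * r ^ 2) - (1 / β) / Real.sqrt (r ^ 2 + (1 + 7 * β) * (0:ℝ) ^ 2)) := by
  intro β
  set A := r ^ 2 + (1 + 2 * α) * z ^ 2
  have hβ₀ : 0 < β := by positivity
  have hβ₁ : β < 1 := (div_lt_one (by linarith)).2 (by linarith)
  have hinvβ : 1 / β = 1 + 4 / α := by simp only [β]; field_simp
  have hcombo : r ^ 2 + (1 + 7 * β) * z ^ 2 = β * r ^ 2 + (1 - β) * A := by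
    simp only [A, β]; field_simp; ring
  have hrA : r ^ 2 < A := lt_add_of_pos_right _ (by positivity)
  have hmain : (1 / β) / √(r ^ 2 + (1 + 7 * β) * z ^ 2) < 1 / r + (4 / α) / √A := by
    have hjensen := one_div_sqrt_mul_add_mul_lt (by positivity) (by positivity) hrA.ne hβ₀ hβ₁
    rw [sqrt_sq hr.le] at hjensen
    calc (1 / β) / √(r ^ 2 + (1 + 7 * β) * z ^ 2)
        = (1 / β) * (1 / √(β * r ^ 2 + (1 - β) * A)) := by rw [hcombo, mul_one_div]
      _ < (1 / β) * (β / r + (1 - β) / √A) := mul_lt_mul_of_pos_left hjensen (by positivity)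
      _ = 1 / r + (4 / α) / √A := by simp only [β]; field_simp; ring
  refine ⟨hmain, by linarith, ?_⟩
  have hsqrt_zero (c : ℝ) : √(r ^ 2 + c * (0 : ℝ) ^ 2) = r := by simp [sqrt_sq hr.le]
  rw [hsqrt_zero, hsqrt_zero, hinvβ]
  ring
end

section
/- Let β₀ > 0, ω := sqrt(1 + 7β₀), y₀(θ) := e^{iωθ}, and define μ₁ := -7β₀/(2(2ω+1)) and μ₋₁ := -7β₀/(2(1 - 2ω)) (assuming 2ω ≠ 1). Then: (a) the function y₁(θ) := μ₁·e^{i(ω+1)θ} + μ₋₁·e^{i(ω-1)θ} satisfies -y₁''(θ) - (1 + 7β₀)·y₁(θ) = cos θ · (y₀''(θ) + y₀(θ)) for all θ; and (b) μ₁ + μ₋₁ - 1 = -3(1 + 7β₀)/(3 + 28β₀). -/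
open Complex

theorem hasDerivAt_cexp_const_mul_ofReal (c : ℂ) (x : ℝ) :
    HasDerivAt (fun θ : ℝ => exp (c * θ)) (c * exp (c * x)) x := by
  simpa [mul_comm] using ((hasDerivAt_id (x : ℂ)).const_mul c).cexp.comp_ofReal

theorem deriv_cexp_const_mul_ofReal (c : ℂ) :
    deriv (fun θ : ℝ => exp (c * θ)) = fun x : ℝ => c * exp (c * x) :=
  funext fun x => (hasDerivAt_cexp_const_mul_ofReal c x).deriv

theorem deriv_deriv_cexp_const_mul_ofReal (c : ℂ) :
    deriv (deriv fun θ : ℝ => exp (c * θ)) = fun x : ℝ => c ^ 2 * exp (c * x) := by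
  rw [deriv_cexp_const_mul_ofReal]
  funext x
  simp only [deriv_const_mul_field', deriv_cexp_const_mul_ofReal]
  ring

theorem deriv_linearCombination_cexp (a b c d : ℂ) :
    deriv (fun θ : ℝ => a * exp (c * θ) + b * exp (d * θ))
      = fun x : ℝ => a * c * exp (c * x) + b * d * exp (d * x) := by
  funext x
  exact (((hasDerivAt_cexp_const_mul_ofReal c x).const_mul a).add
    ((hasDerivAt_cexp_const_mul_ofReal d x).const_mul b)).deriv.trans (by ring)

theorem deriv_deriv_linearCombination_cexp (a b c d : ℂ) :
    deriv (deriv fun θ : ℝ => a * exp (c * θ) + b * exp (d * θ))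
      = fun x : ℝ => a * c ^ 2 * exp (c * x) + b * d ^ 2 * exp (d * x) := by
  rw [deriv_linearCombination_cexp, deriv_linearCombination_cexp]
  simp only [mul_assoc, sq]

/-- Writing `cos θ · e^{iωθ} = (e^{i(ω+1)θ} + e^{i(ω-1)θ}) / 2`, each exponential of `y₁` is an
eigenfunction of `-d²/dθ² - ω²`, with eigenvalues `2ω + 1` and `1 - 2ω`; the two conditions on
`μ₁`, `μ₋₁` match these to the forcing `(1 - ω²) cos θ · e^{iωθ}`. -/
theorem first_order_term_solves_forced_equation (ω μ₁ μm : ℂ)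
    (h₁ : 2 * μ₁ * (2 * ω + 1) = 1 - ω ^ 2) (hm : 2 * μm * (1 - 2 * ω) = 1 - ω ^ 2) (θ : ℝ) :
    -(deriv (deriv fun θ : ℝ => μ₁ * exp (I * (ω + 1) * θ) + μm * exp (I * (ω - 1) * θ)) θ)
        - ω ^ 2 * (μ₁ * exp (I * (ω + 1) * θ) + μm * exp (I * (ω - 1) * θ))
      = ((Real.cos θ : ℝ) : ℂ) *
          (deriv (deriv fun θ : ℝ => exp (I * ω * θ)) θ + exp (I * ω * θ)) := by
  have hplus : exp (I * (ω + 1) * θ) = exp (I * ω * θ) * exp (I * θ) := by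
    rw [← exp_add]; ring_nf
  have hminus : exp (I * (ω - 1) * θ) = exp (I * ω * θ) * exp (-(I * θ)) := by
    rw [← exp_add]; ring_nf
  have hcos : ((Real.cos θ : ℝ) : ℂ) = (exp (I * θ) + exp (-(I * θ))) / 2 := by
    rw [ofReal_cos, cos]; ring_nf
  simp only [deriv_deriv_linearCombination_cexp, deriv_deriv_cexp_const_mul_ofReal]
  rw [hplus, hminus, hcos]
  simp only [mul_pow, I_sq]
  linear_combination (exp (I * ω * θ) * exp (I * θ) / 2) * h₁
    + (exp (I * ω * θ) * exp (-(I * θ)) / 2) * hm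

theorem stmt_19_general (β₀ : ℝ) (hβ : 0 < β₀) :
    let ω := Real.sqrt (1 + 7 * β₀)
    let y₀ : ℝ → ℂ := fun θ => Complex.exp (Complex.I * (ω : ℂ) * (θ : ℂ))
    let μ₁ : ℝ := -7 * β₀ / (2 * (2 * ω + 1))
    let μm : ℝ := -7 * β₀ / (2 * (1 - 2 * ω))
    let y₁ : ℝ → ℂ := fun θ =>
      (μ₁ : ℂ) * Complex.exp (Complex.I * ((ω : ℂ) + 1) * (θ : ℂ)) +
      (μm : ℂ) * Complex.exp (Complex.I * ((ω : ℂ) - 1) * (θ : ℂ))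
    (∀ θ : ℝ, -(deriv (deriv y₁) θ) - (1 + 7 * (β₀ : ℂ)) * y₁ θ
        = ((Real.cos θ : ℝ) : ℂ) * (deriv (deriv y₀) θ + y₀ θ)) ∧
    μ₁ + μm - 1 = -3 * (1 + 7 * β₀) / (3 + 28 * β₀) := by
  intro ω y₀ μ₁ μm y₁
  have hω_sq : ω ^ 2 = 1 + 7 * β₀ := Real.sq_sqrt (by linarith)
  have hω_gt_one : 1 < ω := Real.lt_sqrt_of_sq_lt (by linarith)
  have hω_plus : 2 * ω + 1 ≠ 0 := by linarith
  have hω_minus : 1 - 2 * ω ≠ 0 := by linarith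
  have hμ₁ : 2 * μ₁ * (2 * ω + 1) = 1 - ω ^ 2 := by
    simp only [μ₁]; field_simp; linarith
  have hμm : 2 * μm * (1 - 2 * ω) = 1 - ω ^ 2 := by
    simp only [μm]; field_simp; linarith
  refine ⟨fun θ => ?_, ?_⟩
  · rw [show (1 + 7 * (β₀ : ℂ)) = (ω : ℂ) ^ 2 by exact_mod_cast hω_sq.symm]
    exact first_order_term_solves_forced_equation ω μ₁ μm
      (by exact_mod_cast hμ₁) (by exact_mod_cast hμm) θ
  · have h_denom : (3 : ℝ) + 28 * β₀ ≠ 0 := by positivity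
    simp only [μ₁, μm]
    field_simp
    linear_combination 56 * β₀ * hω_sq

/-- The first-order perturbation term `y₁` of the degenerate-curve expansion solves
`-y₁'' - (1+7β₀) y₁ = cos θ · (y₀'' + y₀)`, and `μ₁ + μ₋₁ - 1 = -3(1+7β₀)/(3+28β₀)`. -/
theorem stmt_19 (β₀ : ℝ) (hβ : 0 < β₀)
    (h2ω : 2 * Real.sqrt (1 + 7 * β₀) ≠ 1) :
    let ω := Real.sqrt (1 + 7 * β₀)
    let y₀ : ℝ → ℂ := fun θ => Complex.exp (Complex.I * (ω : ℂ) * (θ : ℂ))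
    let μ₁ : ℝ := -7 * β₀ / (2 * (2 * ω + 1))
    let μm : ℝ := -7 * β₀ / (2 * (1 - 2 * ω))
    let y₁ : ℝ → ℂ := fun θ =>
      (μ₁ : ℂ) * Complex.exp (Complex.I * ((ω : ℂ) + 1) * (θ : ℂ)) +
      (μm : ℂ) * Complex.exp (Complex.I * ((ω : ℂ) - 1) * (θ : ℂ))
    (∀ θ : ℝ, -(deriv (deriv y₁) θ) - (1 + 7 * (β₀ : ℂ)) * y₁ θ
        = ((Real.cos θ : ℝ) : ℂ) * (deriv (deriv y₀) θ + y₀ θ)) ∧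
    μ₁ + μm - 1 = -3 * (1 + 7 * β₀) / (3 + 28 * β₀) :=
  stmt_19_general β₀ hβ
end
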